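/- Let G be a connected bipartite graph of order n = r + s ≥ 4 whose vertex set is partitioned into stable sets U and W with 1 ≤ |U| = r ≤ s = |W|. If G has an LD-code S such that S ∩ U ≠ ∅ and S ∩ W ≠ ∅, then λ(Ḡ) ≤ λ(G). -/

import Mathlib

open SimpleGraph

/-- `S` is a dominating set of `G`: every vertex outside `S` has a neighbor in `S`. -/
def isDomSet {α : Type*} (G : SimpleGraph α) (S : Set α) : Prop :=
  ∀ v ∉ S, ∃ u ∈ S, G.Adj v u

/-- `S` is a locating-dominating set (LD-set) of `G`. -/
def isLDSet {α : Type*} (G : SimpleGraph α) (S : Set α) : Prop :=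
  isDomSet G S ∧ ∀ u ∉ S, ∀ v ∉ S, u ≠ v →
    G.neighborSet u ∩ S ≠ G.neighborSet v ∩ S

/-- The location-domination number `λ(G)`. -/
noncomputable def ldNum {α : Type*} (G : SimpleGraph α) : ℕ :=
  sInf {n | ∃ S : Set α, isLDSet G S ∧ S.ncard = n}

/-- The global location-domination number `λ_g(G)`. -/
noncomputable def gldNum {α : Type*} (G : SimpleGraph α) : ℕ :=
  sInf {n | ∃ S : Set α, isLDSet G S ∧ isLDSet Gᶜ S ∧ S.ncard = n}

/-- `G` is bipartite with stable sets `U` and `W`. -/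
def bipartiteWith {α : Type*} (G : SimpleGraph α) (U W : Set α) : Prop :=
  U ∪ W = Set.univ ∧ Disjoint U W ∧
    ∀ ⦃u v : α⦄, G.Adj u v → (u ∈ U ∧ v ∈ W) ∨ (u ∈ W ∧ v ∈ U)

/-!
Any LD-code `S` of `G` is already an LD-set of `Gᶜ`. Outside `S`, the trace of a `Gᶜ`-neighborhood
on `S` is the complement in `S` of the trace of the `G`-neighborhood, so `S` still separates the
vertices outside it. It also dominates `Gᶜ`: a vertex of `U` is not adjacent in `G` to a vertex of
`S ∩ U`, and likewise for `W`.
-/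

theorem compl_neighborSet_inter_of_notMem {α : Type*} (G : SimpleGraph α) {S : Set α} {v : α}
    (hv : v ∉ S) : Gᶜ.neighborSet v ∩ S = S \ (G.neighborSet v ∩ S) := by
  ext x
  by_cases hx : x = v
  · subst hx; simp [hv]
  · simp [Ne.symm hx, and_comm]

theorem isLDSet.compl {α : Type*} {G : SimpleGraph α} {S : Set α} (hLD : isLDSet G S)
    (hdom : isDomSet Gᶜ S) : isLDSet Gᶜ S := by
  refine ⟨hdom, fun u hu v hv huv heq => hLD.2 u hu v hv huv ?_⟩
  rw [compl_neighborSet_inter_of_notMem G hu, compl_neighborSet_inter_of_notMem G hv] at heq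
  simpa [Set.inter_comm] using congrArg (S \ ·) heq

theorem bipartiteWith.not_adj_of_mem_left {α : Type*} {G : SimpleGraph α} {U W : Set α}
    (hbip : bipartiteWith G U W) {u v : α} (hu : u ∈ U) (hv : v ∈ U) : ¬G.Adj u v := fun hadj =>
  (hbip.2.2 hadj).elim (fun h => Set.disjoint_left.mp hbip.2.1 hv h.2)
    (fun h => Set.disjoint_left.mp hbip.2.1 hu h.1)

theorem bipartiteWith.symm {α : Type*} {G : SimpleGraph α} {U W : Set α}
    (hbip : bipartiteWith G U W) : bipartiteWith G W U :=
  ⟨Set.union_comm U W ▸ hbip.1, hbip.2.1.symm, fun _ _ hadj => (hbip.2.2 hadj).symm⟩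

theorem bipartiteWith.isDomSet_compl {α : Type*} {G : SimpleGraph α} {U W S : Set α}
    (hbip : bipartiteWith G U W) (hSU : (S ∩ U).Nonempty) (hSW : (S ∩ W).Nonempty) :
    isDomSet Gᶜ S := by
  have dominates_part : ∀ {X Y : Set α}, bipartiteWith G X Y → (S ∩ X).Nonempty →
      ∀ v ∈ X, v ∉ S → ∃ u ∈ S, Gᶜ.Adj v u := by
    rintro X Y hXY ⟨u, huS, huX⟩ v hvX hvS
    exact ⟨u, huS, (compl_adj G v u).mpr
      ⟨fun h => hvS (h ▸ huS), hXY.not_adj_of_mem_left hvX huX⟩⟩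
  intro v hvS
  rcases (hbip.1.symm ▸ Set.mem_univ v : v ∈ U ∪ W) with hvU | hvW
  · exact dominates_part hbip hSU v hvU hvS
  · exact dominates_part hbip.symm hSW v hvW hvS

theorem ldNum_le_ncard {α : Type*} {G : SimpleGraph α} {S : Set α} (hLD : isLDSet G S) :
    ldNum G ≤ S.ncard :=
  Nat.sInf_le ⟨S, hLD, rfl⟩

theorem stmt9_general {V : Type*} (G : SimpleGraph V) (U W : Set V)
    (hbip : bipartiteWith G U W)
    (S : Set V) (hLD : isLDSet G S) (hcode : S.ncard = ldNum G)
    (hSU : (S ∩ U).Nonempty) (hSW : (S ∩ W).Nonempty) :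
    ldNum Gᶜ ≤ ldNum G :=
  hcode ▸ ldNum_le_ncard (hLD.compl (hbip.isDomSet_compl hSU hSW))

theorem stmt9 {V : Type*} [Fintype V] (G : SimpleGraph V) (U W : Set V) (r s : ℕ)
    (hconn : G.Connected) (hbip : bipartiteWith G U W)
    (hU : U.ncard = r) (hW : W.ncard = s)
    (hr1 : 1 ≤ r) (hrs : r ≤ s) (hn : 4 ≤ r + s)
    (S : Set V) (hLD : isLDSet G S) (hcode : S.ncard = ldNum G)
    (hSU : (S ∩ U).Nonempty) (hSW : (S ∩ W).Nonempty) :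
    ldNum Gᶜ ≤ ldNum G :=
  stmt9_general G U W hbip S hLD hcode hSU hSW
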